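/- arXiv:1611.01675 — 2 statements merged into one kernel-verified Lean document; each statement's English description precedes it below -/
import Mathlib

section
/- Let X_1, X_2, ... be i.i.d. Bernoulli(p) with p ≠ α, S_n = Σ_{i≤n} X_i, and define τ = inf{n : (n+1)·b(n,α,S_n) ≤ ε} for ε ∈ (0,1). Then τ < ∞ almost surely. -/
/-!
By the strong law of large numbers `S_n / n → p` almost surely, so it suffices to treat a
deterministic sequence with this limit. Since `b(n,p,S_n) ≤ 1`, `b(n,α,S_n)` is at most the
likelihood ratio `(α/p)^{S_n} ((1-α)/(1-p))^{n-S_n} = exp (n r_n)`, whose rate `r_n` tends to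
`p log(α/p) + (1-p) log((1-α)/(1-p))`, the negative of the Kullback–Leibler divergence of
`Bernoulli α` from `Bernoulli p`. By Gibbs' inequality this limit is negative when `p ≠ α`, so
`(n+1) b(n,α,S_n)` decays exponentially and eventually drops below `ε`.
-/

open MeasureTheory ProbabilityTheory Filter Topology Real

/-- The binomial probability mass function `b(n,p,x) = C(n,x) p^x (1-p)^(n-x)`. -/
noncomputable def binomPMF (n : ℕ) (p : ℝ) (x : ℕ) : ℝ :=
  (n.choose x : ℝ) * p ^ x * (1 - p) ^ (n - x)

lemma binomPMF_nonneg {p : ℝ} (hp0 : 0 ≤ p) (hp1 : p ≤ 1) (n x : ℕ) : 0 ≤ binomPMF n p x := by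
  have : 0 ≤ 1 - p := by linarith
  unfold binomPMF
  positivity

lemma sum_binomPMF (n : ℕ) (p : ℝ) : ∑ x ∈ Finset.range (n + 1), binomPMF n p x = 1 := by
  calc ∑ x ∈ Finset.range (n + 1), binomPMF n p x = (p + (1 - p)) ^ n := by
        rw [add_pow]
        exact Finset.sum_congr rfl fun x _ => by rw [binomPMF]; ring
    _ = 1 := by simp

lemma binomPMF_le_one {p : ℝ} (hp0 : 0 ≤ p) (hp1 : p ≤ 1) {n x : ℕ} (hx : x ≤ n) :
    binomPMF n p x ≤ 1 :=
  sum_binomPMF n p ▸ Finset.single_le_sum (fun k _ => binomPMF_nonneg hp0 hp1 n k)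
    (Finset.mem_range.2 (Nat.lt_succ_of_le hx))

lemma binomPMF_eq_mul_likelihoodRatio {p : ℝ} (hp0 : p ≠ 0) (hp1 : p ≠ 1) (n : ℕ) (α : ℝ)
    (x : ℕ) :
    binomPMF n α x = binomPMF n p x * ((α / p) ^ x * ((1 - α) / (1 - p)) ^ (n - x)) := by
  have : 1 - p ≠ 0 := sub_ne_zero.2 hp1.symm
  simp only [binomPMF, div_pow]
  field_simp

lemma binomPMF_le_likelihoodRatio {p α : ℝ} (hp : p ∈ Set.Ioo 0 1) (hα : α ∈ Set.Icc 0 1)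
    {n x : ℕ} (hx : x ≤ n) :
    binomPMF n α x ≤ (α / p) ^ x * ((1 - α) / (1 - p)) ^ (n - x) := by
  obtain ⟨hp0, hp1⟩ := hp
  have : 0 ≤ 1 - α := by linarith [hα.2]
  have : 0 < 1 - p := by linarith
  rw [binomPMF_eq_mul_likelihoodRatio hp0.ne' hp1.ne]
  exact mul_le_of_le_one_left (by have := hα.1; positivity) (binomPMF_le_one hp0.le hp1.le hx)

lemma pow_mul_pow_sub_eq_exp {A B : ℝ} (hA : 0 < A) (hB : 0 < B) {n x : ℕ} (hx : x ≤ n) :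
    A ^ x * B ^ (n - x) = exp (n * ((x / n) * log A + (1 - x / n) * log B)) := by
  rcases Nat.eq_zero_or_pos n with rfl | hn
  · simp [Nat.le_zero.1 hx]
  rw [← exp_log hA, ← exp_log hB, ← exp_nat_mul, ← exp_nat_mul, ← exp_add, log_exp, log_exp,
    Nat.cast_sub hx]
  congr 1
  field_simp

lemma mul_log_div_add_mul_log_div_lt_zero {p α : ℝ} (hp : p ∈ Set.Ioo 0 1)
    (hα : α ∈ Set.Ioo 0 1) (hpα : p ≠ α) :
    p * log (α / p) + (1 - p) * log ((1 - α) / (1 - p)) < 0 := by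
  obtain ⟨hp0, hp1⟩ := hp
  obtain ⟨hα0, hα1⟩ := hα
  have hq0 : 0 < 1 - p := by linarith
  have hA : log (α / p) < α / p - 1 := log_lt_sub_one_of_pos (div_pos hα0 hp0)
    (by rw [Ne, div_eq_one_iff_eq hp0.ne']; exact hpα.symm)
  have hB : log ((1 - α) / (1 - p)) < (1 - α) / (1 - p) - 1 :=
    log_lt_sub_one_of_pos (div_pos (by linarith) hq0)
      (by rw [Ne, div_eq_one_iff_eq hq0.ne']; intro h; exact hpα (by linarith))
  calc p * log (α / p) + (1 - p) * log ((1 - α) / (1 - p))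
      < p * (α / p - 1) + (1 - p) * ((1 - α) / (1 - p) - 1) := by gcongr
    _ = 0 := by field_simp; ring

lemma tendsto_succ_mul_exp_mul_of_tendsto_neg {x : ℕ → ℝ} {L : ℝ} (hL : L < 0)
    (hx : Tendsto x atTop (𝓝 L)) :
    Tendsto (fun n : ℕ => ((n : ℝ) + 1) * exp (n * x n)) atTop (𝓝 0) := by
  have hr : exp (L / 2) < 1 := exp_lt_one_iff.2 (by linarith)
  have hgeom : Tendsto (fun n : ℕ => ((n : ℝ) + 1) * exp (L / 2) ^ n) atTop (𝓝 0) := by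
    simpa [add_mul] using (tendsto_self_mul_const_pow_of_lt_one (exp_pos _).le hr).add
      (tendsto_pow_atTop_nhds_zero_of_lt_one (exp_pos _).le hr)
  refine squeeze_zero' (.of_forall fun n => by positivity) ?_ hgeom
  filter_upwards [hx.eventually_le_const (show L < L / 2 by linarith)] with n hn
  rw [← exp_nat_mul]
  gcongr

lemma tendsto_succ_mul_binomPMF_of_tendsto_div {p α : ℝ} (hp : p ∈ Set.Ioo 0 1)
    (hα : α ∈ Set.Ioo 0 1) (hpα : p ≠ α) {s : ℕ → ℕ} (hs : ∀ n, s n ≤ n)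
    (hlim : Tendsto (fun n : ℕ => (s n : ℝ) / n) atTop (𝓝 p)) :
    Tendsto (fun n : ℕ => ((n : ℝ) + 1) * binomPMF n α (s n)) atTop (𝓝 0) := by
  obtain ⟨hp0, hp1⟩ := hp
  obtain ⟨hα0, hα1⟩ := hα
  set A := α / p
  set B := (1 - α) / (1 - p)
  have hA : 0 < A := div_pos hα0 hp0
  have hB : 0 < B := div_pos (by linarith) (by linarith)
  have hrate : Tendsto (fun n : ℕ => ((s n : ℝ) / n) * log A + (1 - (s n : ℝ) / n) * log B)
      atTop (𝓝 (p * log A + (1 - p) * log B)) :=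
    (hlim.mul_const _).add ((tendsto_const_nhds.sub hlim).mul_const _)
  refine squeeze_zero (fun n => by have := binomPMF_nonneg hα0.le hα1.le n (s n); positivity)
    (fun n => ?_) (tendsto_succ_mul_exp_mul_of_tendsto_neg
      (mul_log_div_add_mul_log_div_lt_zero ⟨hp0, hp1⟩ ⟨hα0, hα1⟩ hpα) hrate)
  rw [← pow_mul_pow_sub_eq_exp hA hB (hs n)]
  gcongr
  exact binomPMF_le_likelihoodRatio ⟨hp0, hp1⟩ ⟨hα0.le, hα1.le⟩ (hs n)

lemma preimage_zero_eq_compl_of_le_one {α : Type*} {X : α → ℕ} (hX1 : ∀ a, X a ≤ 1) :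
    X ⁻¹' {0} = (X ⁻¹' {1})ᶜ := by
  ext a
  have := hX1 a
  simp only [Set.mem_preimage, Set.mem_singleton_iff, Set.mem_compl_iff]
  omega

lemma identDistrib_of_le_one {Ω Ω' : Type*} [MeasurableSpace Ω] [MeasurableSpace Ω']
    {μ : Measure Ω} {ν : Measure Ω'} [IsProbabilityMeasure μ] [IsProbabilityMeasure ν]
    {X : Ω → ℕ} {Y : Ω' → ℕ} (hX : Measurable X) (hY : Measurable Y)
    (hX1 : ∀ ω, X ω ≤ 1) (hY1 : ∀ ω, Y ω ≤ 1) (h : μ (X ⁻¹' {1}) = ν (Y ⁻¹' {1})) :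
    IdentDistrib X Y μ ν := by
  refine ⟨hX.aemeasurable, hY.aemeasurable, Measure.ext_of_singleton fun k => ?_⟩
  rw [Measure.map_apply hX (measurableSet_singleton k),
    Measure.map_apply hY (measurableSet_singleton k)]
  rcases k with _ | _ | k
  · rw [preimage_zero_eq_compl_of_le_one hX1, preimage_zero_eq_compl_of_le_one hY1,
      prob_compl_eq_one_sub (hX (measurableSet_singleton 1)),
      prob_compl_eq_one_sub (hY (measurableSet_singleton 1)), h]
  · exact h
  · rw [Set.preimage_singleton_eq_empty.2 fun ⟨ω, hω⟩ => by have := hX1 ω; omega,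
      Set.preimage_singleton_eq_empty.2 fun ⟨ω, hω⟩ => by have := hY1 ω; omega,
      measure_empty, measure_empty]

lemma ae_tendsto_sum_div_of_bernoulli {Ω : Type*} [MeasureSpace Ω]
    [IsProbabilityMeasure (ℙ : Measure Ω)] {p : ℝ} (hp : 0 ≤ p) {X : ℕ → Ω → ℕ}
    (hmeas : ∀ i, Measurable (X i)) (hindep : Pairwise fun i j => IndepFun (X i) (X j))
    (hval : ∀ i ω, X i ω ≤ 1) (hdist : ∀ i, ℙ {ω | X i ω = 1} = ENNReal.ofReal p) :
    ∀ᵐ ω, Tendsto (fun n : ℕ => ((∑ i ∈ Finset.range n, X i ω : ℕ) : ℝ) / n) atTop (𝓝 p) := by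
  have hX0 : (fun ω => (X 0 ω : ℝ)) = {ω | X 0 ω = 1}.indicator 1 := by
    funext ω
    rcases Nat.le_one_iff_eq_zero_or_eq_one.1 (hval 0 ω) with h | h <;> simp [h]
  have hmeas1 : MeasurableSet {ω | X 0 ω = 1} := hmeas 0 (measurableSet_singleton 1)
  have hmean : ℙ[fun ω => (X 0 ω : ℝ)] = p := by
    rw [hX0, integral_indicator_one hmeas1, measureReal_def, hdist 0, ENNReal.toReal_ofReal hp]
  have hslln := strong_law_ae_real (fun i ω => (X i ω : ℝ))
    (hX0 ▸ (integrable_const 1).indicator hmeas1)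
    (fun i j hij => (hindep hij).comp measurable_from_top measurable_from_top)
    (fun i => (identDistrib_of_le_one (hmeas i) (hmeas 0) (hval i) (hval 0)
      ((hdist i).trans (hdist 0).symm)).comp measurable_from_top)
  simpa only [hmean, Nat.cast_sum] using hslln

/-- If `p ≠ α`, the CSM stopping time `τ = inf{n : (n+1) b(n,α,S_n) ≤ ε}` is finite
almost surely: a.s. there exists `n` with `(n+1) b(n,α,S_n) ≤ ε`. -/
theorem stmt7
    (Ω : Type*) [MeasureSpace Ω] [IsProbabilityMeasure (ℙ : Measure Ω)]
    (p α ε : ℝ) (hp : p ∈ Set.Ioo (0:ℝ) 1) (hα : α ∈ Set.Ioo (0:ℝ) 1)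
    (hpα : p ≠ α) (hε : ε ∈ Set.Ioo (0:ℝ) 1)
    (X : ℕ → Ω → ℕ)
    (hmeas : ∀ i, Measurable (X i))
    (hindep : iIndepFun X ℙ)
    (hval : ∀ i ω, X i ω ≤ 1)
    (hdist : ∀ i, ℙ {ω | X i ω = 1} = ENNReal.ofReal p) :
    ℙ {ω | ∃ n : ℕ, 1 ≤ n ∧
        ((n : ℝ) + 1) * binomPMF n α (∑ i ∈ Finset.range n, X i ω) ≤ ε} = 1 := by
  have hstop : ∀ᵐ ω, ∃ n : ℕ, 1 ≤ n ∧
      ((n : ℝ) + 1) * binomPMF n α (∑ i ∈ Finset.range n, X i ω) ≤ ε := by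
    filter_upwards [ae_tendsto_sum_div_of_bernoulli hp.1.le hmeas
      (fun i j hij => hindep.indepFun hij) hval hdist] with ω hω
    have hsum_le : ∀ n, ∑ i ∈ Finset.range n, X i ω ≤ n := fun n =>
      (Finset.sum_le_sum fun i _ => hval i ω).trans_eq (by simp)
    obtain ⟨n, hn_le, hn_pos⟩ :=
      (((tendsto_succ_mul_binomPMF_of_tendsto_div hp hα hpα hsum_le hω).eventually_le_const
        hε.1).and (eventually_ge_atTop 1)).exists
    exact ⟨n, hn_pos, hn_le⟩
  rw [measure_congr (eventuallyEq_univ.2 hstop), measure_univ]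
end

section
/- For p ∈ (0,1), α ∈ (0,1), and c ∈ (0,1) with c < α, the quantity (n+1) · C(n, ⌊cn⌋) α^{⌊cn⌋} (1-α)^{n-⌊cn⌋} tends to 0 as n → ∞; more precisely (1/n) log b(n, α, ⌊cn⌋) → −D(c‖α) < 0, where D(c‖α) = c log(c/α) + (1−c) log((1−c)/(1−α)). -/
/-!
By Stirling's formula `log n! = n log n - n + O(log n)`, hence `log C(n, k) = n H(k/n) + O(log n)`
uniformly in `k ≤ n`, where `H` is the binary entropy. So whenever `k n / n → c`,
`(1/n) log b(n, α, k n) → H(c) + c log α + (1 - c) log (1 - α) = -D(c‖α)`.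
Gibbs' inequality (`log x < x - 1` at `x = α/c` and `x = (1-α)/(1-c)`) gives `D(c‖α) > 0`, so
eventually `b(n, α, ⌊cn⌋) ≤ exp (-n D/2)`, which beats the polynomial factor `n + 1`.
-/

open Filter Real

open scoped Nat Topology

lemma log_factorial_ge (n : ℕ) : n * log n - n ≤ log n ! := by
  rcases eq_or_ne n 0 with rfl | hn
  · simp
  have := Stirling.le_log_factorial_stirling hn
  have : 0 ≤ log (2 * π) := log_nonneg (by linarith [pi_gt_three])
  linarith [log_natCast_nonneg n]

lemma log_factorial_le (n : ℕ) : log n ! ≤ n * log n - n + log n / 2 + 1 := by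
  rcases n with _ | n
  · simp
  have hmono : log (Stirling.stirlingSeq (n + 1)) ≤ log (Stirling.stirlingSeq 1) :=
    Stirling.log_stirlingSeq'_antitone (Nat.zero_le n)
  rw [Stirling.stirlingSeq_one, log_div (exp_ne_zero 1) (by positivity), log_exp,
    log_sqrt zero_le_two, Stirling.log_stirlingSeq_formula, log_mul two_ne_zero (by positivity),
    log_div (by positivity) (exp_ne_zero 1), log_exp] at hmono
  linarith

lemma log_natCast_le_log_natCast {k n : ℕ} (h : k ≤ n) : log k ≤ log n := by
  rcases Nat.eq_zero_or_pos k with rfl | hk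
  · simpa using log_natCast_nonneg n
  exact log_le_log (by positivity) (by exact_mod_cast h)

lemma abs_log_choose_sub_mul_binEntropy_le {n k : ℕ} (hkn : k ≤ n) :
    |log (n.choose k) - n * binEntropy (k / n)| ≤ log n + 2 := by
  rcases eq_or_ne n 0 with rfl | hn
  · obtain rfl := Nat.le_zero.mp hkn
    norm_num
  have hn' : (n : ℝ) ≠ 0 := Nat.cast_ne_zero.mpr hn
  have hentropy :
      n * binEntropy (k / n) = n * log n - k * log k - (n - k : ℕ) * log (n - k : ℕ) := by
    have hsub : 1 - (k : ℝ) / n = (n - k : ℕ) * (n : ℝ)⁻¹ := by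
      rw [Nat.cast_sub hkn]; field_simp
    rw [binEntropy_eq_negMulLog_add_negMulLog_one_sub, hsub, div_eq_mul_inv, negMulLog_mul,
      negMulLog_mul]
    simp only [negMulLog, log_inv, Nat.cast_sub hkn]
    field_simp
    ring
  have hchoose : log (n.choose k) = log n ! - log k ! - log (n - k)! := by
    rw [Nat.cast_choose ℝ hkn, log_div (by positivity) (by positivity),
      log_mul (by positivity) (by positivity)]
    ring
  have hsub : ((n - k : ℕ) : ℝ) = n - k := Nat.cast_sub hkn
  rw [abs_le, hchoose, hentropy]
  constructor <;>
    linarith [log_natCast_le_log_natCast hkn, log_natCast_le_log_natCast (Nat.sub_le n k),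
      log_natCast_nonneg n, log_factorial_ge n, log_factorial_le n, log_factorial_ge k,
      log_factorial_le k, log_factorial_ge (n - k), log_factorial_le (n - k)]

lemma tendsto_log_add_two_div_atTop :
    Tendsto (fun n : ℕ => (log n + 2) / n) atTop (𝓝 0) := by
  have hlog : Tendsto (fun x : ℝ => log x / x) atTop (𝓝 0) := by
    simpa using tendsto_pow_log_div_mul_add_atTop 1 0 1 one_ne_zero
  simpa [add_div] using
    (hlog.comp tendsto_natCast_atTop_atTop).add (tendsto_const_div_atTop_nhds_zero_nat 2)

lemma tendsto_log_choose_div {k : ℕ → ℕ} {c : ℝ} (hk : ∀ n, k n ≤ n)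
    (hc : Tendsto (fun n : ℕ => (k n : ℝ) / n) atTop (𝓝 c)) :
    Tendsto (fun n : ℕ => log (n.choose (k n)) / n) atTop (𝓝 (binEntropy c)) := by
  have hentropy := (binEntropy_continuous.tendsto c).comp hc
  have herror : Tendsto (fun n : ℕ => log (n.choose (k n)) / n - binEntropy (k n / n)) atTop
      (𝓝 0) := by
    refine squeeze_zero_norm' ?_ tendsto_log_add_two_div_atTop
    filter_upwards [eventually_gt_atTop 0] with n hn
    have hn' : (0 : ℝ) < n := Nat.cast_pos.mpr hn
    rw [Real.norm_eq_abs, ← mul_div_cancel_left₀ (binEntropy _) hn'.ne', ← sub_div, abs_div,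
      abs_of_pos hn']
    exact div_le_div_of_nonneg_right (abs_log_choose_sub_mul_binEntropy_le (hk n)) hn'.le
  simpa using herror.add hentropy

lemma binomPMF_nonneg_s9 {p : ℝ} (hp : p ∈ Set.Icc (0 : ℝ) 1) (n k : ℕ) :
    0 ≤ binomPMF n p k := by
  have := sub_nonneg.mpr hp.2
  have := hp.1
  unfold binomPMF
  positivity

lemma log_binomPMF {p : ℝ} (hp : p ∈ Set.Ioo (0 : ℝ) 1) {n k : ℕ} (hkn : k ≤ n) :
    log (binomPMF n p k) = log (n.choose k) + k * log p + (n - k : ℕ) * log (1 - p) := by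
  have : (0 : ℝ) < n.choose k := Nat.cast_pos.mpr (Nat.choose_pos hkn)
  have := sub_pos.mpr hp.2
  have := hp.1
  rw [binomPMF, log_mul (by positivity) (by positivity), log_mul (by positivity) (by positivity),
    log_pow, log_pow]

lemma tendsto_log_binomPMF_div {p c : ℝ} (hp : p ∈ Set.Ioo (0 : ℝ) 1) {k : ℕ → ℕ}
    (hk : ∀ n, k n ≤ n) (hc : Tendsto (fun n : ℕ => (k n : ℝ) / n) atTop (𝓝 c)) :
    Tendsto (fun n : ℕ => log (binomPMF n p (k n)) / n) atTop
      (𝓝 (binEntropy c + c * log p + (1 - c) * log (1 - p))) := by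
  have hlim := ((tendsto_log_choose_div hk hc).add (hc.mul_const (log p))).add
    (((tendsto_const_nhds (x := (1 : ℝ))).sub hc).mul_const (log (1 - p)))
  refine hlim.congr' ?_
  filter_upwards [eventually_gt_atTop 0] with n hn
  have hn' : (n : ℝ) ≠ 0 := Nat.cast_ne_zero.mpr hn.ne'
  rw [log_binomPMF hp (hk n), Nat.cast_sub (hk n)]
  field_simp

noncomputable def klBernoulli (c p : ℝ) : ℝ :=
  c * log (c / p) + (1 - c) * log ((1 - c) / (1 - p))

lemma binEntropy_add_mul_log_eq_neg_klBernoulli {c p : ℝ} (hc : c ∈ Set.Ioo (0 : ℝ) 1)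
    (hp : p ∈ Set.Ioo (0 : ℝ) 1) :
    binEntropy c + c * log p + (1 - c) * log (1 - p) = -klBernoulli c p := by
  have := sub_pos.mpr hp.2
  have := sub_pos.mpr hc.2
  rw [binEntropy, klBernoulli, log_div hc.1.ne' hp.1.ne', log_div (by positivity) (by positivity),
    log_inv, log_inv]
  ring

lemma klBernoulli_pos {c p : ℝ} (hc : c ∈ Set.Ioo (0 : ℝ) 1) (hp : p ∈ Set.Ioo (0 : ℝ) 1)
    (hcp : c ≠ p) : 0 < klBernoulli c p := by
  have h1c := sub_pos.mpr hc.2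
  have h1p := sub_pos.mpr hp.2
  have l1 : log (p / c) < p / c - 1 :=
    log_lt_sub_one_of_pos (div_pos hp.1 hc.1) (div_ne_one_of_ne hcp.symm)
  have l2 : log ((1 - p) / (1 - c)) < (1 - p) / (1 - c) - 1 :=
    log_lt_sub_one_of_pos (div_pos h1p h1c)
      (div_ne_one_of_ne ((sub_right_injective (b := 1)).ne hcp.symm))
  have e1 : log (c / p) = - log (p / c) := by rw [← log_inv, inv_div]
  have e2 : log ((1 - c) / (1 - p)) = - log ((1 - p) / (1 - c)) := by rw [← log_inv, inv_div]
  have hsum : c * (p / c - 1) + (1 - c) * ((1 - p) / (1 - c) - 1) = 0 := by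
    rw [mul_sub, mul_sub, mul_div_cancel₀ _ hc.1.ne', mul_div_cancel₀ _ h1c.ne']; ring
  rw [klBernoulli, e1, e2]
  linarith [mul_lt_mul_of_pos_left l1 hc.1, mul_lt_mul_of_pos_left l2 h1c]

lemma tendsto_natCast_add_one_mul_of_tendsto_log_div {u : ℕ → ℝ} {L : ℝ}
    (hu : ∀ n, 0 ≤ u n) (h : Tendsto (fun n : ℕ => log (u n) / n) atTop (𝓝 L))
    (hL : L < 0) :
    Tendsto (fun n : ℕ => ((n : ℝ) + 1) * u n) atTop (𝓝 0) := by
  set r := exp (L / 2)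
  have hr : r < 1 := exp_lt_one_iff.mpr (by linarith)
  have hgeom : Tendsto (fun n : ℕ => ((n : ℝ) + 1) * r ^ n) atTop (𝓝 0) := by
    simpa [add_mul] using (tendsto_self_mul_const_pow_of_lt_one (exp_pos _).le hr).add
      (tendsto_pow_atTop_nhds_zero_of_lt_one (exp_pos _).le hr)
  have hbound : ∀ᶠ n : ℕ in atTop, u n ≤ r ^ n := by
    filter_upwards [h.eventually_lt_const (by linarith : L < L / 2), eventually_gt_atTop 0]
      with n hlt hn
    rcases (hu n).eq_or_lt with h0 | hpos
    · rw [← h0]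
      positivity
    rw [div_lt_iff₀ (Nat.cast_pos.mpr hn)] at hlt
    rw [← exp_nat_mul, ← exp_log hpos]
    exact exp_le_exp.mpr (by linarith)
  refine squeeze_zero' (Eventually.of_forall fun n => by have := hu n; positivity) ?_ hgeom
  filter_upwards [hbound] with n hn
  exact mul_le_mul_of_nonneg_left hn (by positivity)

theorem stmt9_general (α c : ℝ) (hα : α ∈ Set.Ioo (0:ℝ) 1)
    (hc : c ∈ Set.Ioo (0:ℝ) 1) (hcα : c < α) :
    Tendsto (fun n : ℕ => ((n : ℝ) + 1) * binomPMF n α ⌊c * n⌋₊) atTop (nhds 0) ∧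
    Tendsto (fun n : ℕ => (1 / (n : ℝ)) * Real.log (binomPMF n α ⌊c * n⌋₊)) atTop
      (nhds (-(c * Real.log (c / α) + (1 - c) * Real.log ((1 - c) / (1 - α))))) ∧
    0 < c * Real.log (c / α) + (1 - c) * Real.log ((1 - c) / (1 - α)) := by
  have hfloor : Tendsto (fun n : ℕ => (⌊c * n⌋₊ : ℝ) / n) atTop (𝓝 c) :=
    (tendsto_nat_floor_mul_div_atTop hc.1.le).comp tendsto_natCast_atTop_atTop
  have hfloor_le (n : ℕ) : ⌊c * n⌋₊ ≤ n :=
    Nat.floor_le_of_le (mul_le_of_le_one_left n.cast_nonneg hc.2.le)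
  have hlog := tendsto_log_binomPMF_div hα hfloor_le hfloor
  rw [binEntropy_add_mul_log_eq_neg_klBernoulli hc hα] at hlog
  have hkl := klBernoulli_pos hc hα hcα.ne
  have hnonneg (n : ℕ) := binomPMF_nonneg_s9 (Set.Ioo_subset_Icc_self hα) n ⌊c * n⌋₊
  refine ⟨tendsto_natCast_add_one_mul_of_tendsto_log_div hnonneg hlog (neg_neg_of_pos hkl), ?_,
    hkl⟩
  simp only [one_div_mul_eq_div]
  exact hlog

/-- Large deviation asymptotics: for `c < α`, `(n+1) b(n,α,⌊cn⌋) → 0`; more precisely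
`(1/n) log b(n,α,⌊cn⌋) → −D(c‖α) < 0` with `D` the Bernoulli Kullback–Leibler divergence. -/
theorem stmt9 (p α c : ℝ) (hp : p ∈ Set.Ioo (0:ℝ) 1) (hα : α ∈ Set.Ioo (0:ℝ) 1)
    (hc : c ∈ Set.Ioo (0:ℝ) 1) (hcα : c < α) :
    Tendsto (fun n : ℕ => ((n : ℝ) + 1) * binomPMF n α ⌊c * n⌋₊) atTop (nhds 0) ∧
    Tendsto (fun n : ℕ => (1 / (n : ℝ)) * Real.log (binomPMF n α ⌊c * n⌋₊)) atTop
      (nhds (-(c * Real.log (c / α) + (1 - c) * Real.log ((1 - c) / (1 - α))))) ∧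
    0 < c * Real.log (c / α) + (1 - c) * Real.log ((1 - c) / (1 - α)) :=
  stmt9_general α c hα hc hcα
end
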